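/- Let g > 1 and 1 ≤ p < g. Then there exists a finite constant C = C(p, g) (one may take C = 1 when p ≤ g − 1, and C = 2^{p+1−g} + 2^{2p−g}·p^p·e^{−p}/(Γ(p)·(g − p)) when g − 1 < p < g) such that for all L > 0 and all ζ > 0: ∫₀^∞ u^{p−1}·(2uL + 1)^{−g}·exp(−u·L·ζ/(2uL + 1)) du ≤ C·Γ(p)·(L·ζ)^{−p}. -/

import Mathlib

/-!
Split the integral at `u = 1 / (2L)`. Below this point `2uL + 1 ≤ 2`, so the exponent is at most
`-(Lζ/2) u` and the integrand is dominated by a Gamma integrand, giving `Γ(p) (Lζ/2)^{-p}`.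
Above it the exponential is at most `e^{-ζ/4} ≤ p^p e^{-p} (ζ/4)^{-p}`, while
`u^{p-1} (2uL + 1)^{-g} ≤ u^{p-1} (2Lu)^{-g}` is integrable at infinity because `p < g`, with
integral `(2L)^{-p} / (g - p)`. Both pieces are multiples of `(Lζ)^{-p}`.
-/

open MeasureTheory Real Set

/-- `x ↦ x ^ p * exp (-x)` is maximal at `x = p`. -/
lemma exp_neg_le_mul_rpow_neg {p x : ℝ} (hp : 0 < p) (hx : 0 < x) :
    exp (-x) ≤ p ^ p * exp (-p) * x ^ (-p) := by
  have h : (x / p) ^ p ≤ exp (x - p) := by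
    calc (x / p) ^ p ≤ exp (x / p - 1) ^ p := by
          gcongr
          linarith [add_one_le_exp (x / p - 1)]
      _ = exp (x - p) := by rw [← exp_mul]; field_simp
  rw [div_rpow hx.le hp.le, div_le_iff₀ (by positivity), exp_sub] at h
  rw [rpow_neg hx.le, ← div_eq_mul_inv, le_div_iff₀ (by positivity)]
  calc exp (-x) * x ^ p ≤ exp (-x) * (exp x / exp p * p ^ p) := by gcongr
    _ = p ^ p * exp (-p) := by rw [exp_neg, exp_neg]; field_simp

lemma lintegral_rpow_mul_exp_neg_mul_Ioi {s c : ℝ} (hs : 0 < s) (hc : 0 < c) :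
    ∫⁻ u in Ioi 0, ENNReal.ofReal (u ^ (s - 1) * exp (-(c * u))) =
      ENNReal.ofReal ((1 / c) ^ s * Gamma s) := by
  have h := integral_rpow_mul_exp_neg_mul_Ioi hs hc
  rw [← h, ofReal_integral_eq_lintegral_ofReal]
  · exact .of_integral_ne_zero (by rw [h]; have := Gamma_pos_of_pos hs; positivity)
  · exact ae_restrict_of_forall_mem measurableSet_Ioi fun u (hu : 0 < u) ↦ by positivity

lemma lintegral_mul_rpow_neg_mul_rpow_Ioi_inv {c p g : ℝ} (hc : 0 < c) (hpg : p < g) :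
    ∫⁻ u in Ioi c⁻¹, ENNReal.ofReal ((c * u) ^ (-g) * u ^ (p - 1)) =
      ENNReal.ofReal (c ^ (-p) / (g - p)) := by
  have hr : p - 1 - g < -1 := by linarith
  have hc' : 0 < c⁻¹ := inv_pos.2 hc
  have hsplit : EqOn (fun u ↦ (c * u) ^ (-g) * u ^ (p - 1)) (fun u ↦ c ^ (-g) * u ^ (p - 1 - g))
      (Ioi c⁻¹) := fun u (hu : c⁻¹ < u) ↦ by
    have hu0 := hc'.trans hu
    simp only [mul_rpow hc.le hu0.le, sub_eq_add_neg (p - 1), rpow_add hu0]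
    ring
  have hrpow : c ^ (-g) * c ^ (g - p) = c ^ (-p) := by rw [← rpow_add hc]; ring_nf
  rw [setLIntegral_congr_fun measurableSet_Ioi fun u hu ↦ congrArg ENNReal.ofReal (hsplit hu),
    ← ofReal_integral_eq_lintegral_ofReal ((integrableOn_Ioi_rpow_of_lt hr hc').const_mul _)
      (ae_restrict_of_forall_mem measurableSet_Ioi fun u (hu : c⁻¹ < u) ↦ by
        have := hc'.trans hu; positivity),
    integral_const_mul, integral_Ioi_rpow_of_lt hr hc', show p - 1 - g + 1 = -(g - p) by ring,
    inv_rpow hc.le, ← rpow_neg hc.le, neg_neg, ← hrpow]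
  congr 1
  have : g - p ≠ 0 := by linarith
  field_simp

noncomputable def cirIntegrand (p g L ζ u : ℝ) : ℝ :=
  u ^ (p - 1) * (2 * u * L + 1) ^ (-g) * exp (-(u * L * ζ) / (2 * u * L + 1))

section cirIntegrand

variable {p g L ζ u : ℝ}

lemma cirIntegrand_le_of_two_mul_le_one (hg : 0 ≤ g) (hL : 0 ≤ L) (hζ : 0 ≤ ζ) (hu : 0 ≤ u)
    (h : 2 * L * u ≤ 1) : cirIntegrand p g L ζ u ≤ u ^ (p - 1) * exp (-(L * ζ / 2 * u)) := by
  have hpos : 0 < 2 * u * L + 1 := by positivity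
  have hpow : (2 * u * L + 1) ^ (-g) ≤ 1 :=
    rpow_le_one_of_one_le_of_nonpos (by linarith [mul_nonneg (mul_nonneg zero_le_two hu) hL])
      (neg_nonpos.2 hg)
  have hexp : -(u * L * ζ) / (2 * u * L + 1) ≤ -(L * ζ / 2 * u) := by
    rw [div_le_iff₀ hpos]
    nlinarith [mul_nonneg (mul_nonneg hu hL) hζ]
  calc cirIntegrand p g L ζ u ≤ u ^ (p - 1) * 1 * exp (-(L * ζ / 2 * u)) := by
        unfold cirIntegrand; gcongr
    _ = u ^ (p - 1) * exp (-(L * ζ / 2 * u)) := by rw [mul_one]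

lemma cirIntegrand_le_of_one_le_two_mul (hg : 0 ≤ g) (hL : 0 < L) (hζ : 0 ≤ ζ) (hu : 0 < u)
    (h : 1 ≤ 2 * L * u) :
    cirIntegrand p g L ζ u ≤ exp (-(ζ / 4)) * ((2 * L * u) ^ (-g) * u ^ (p - 1)) := by
  have hpos : 0 < 2 * u * L + 1 := by positivity
  have hpow : (2 * u * L + 1) ^ (-g) ≤ (2 * L * u) ^ (-g) :=
    rpow_le_rpow_of_nonpos (by positivity) (by linarith) (neg_nonpos.2 hg)
  have hexp : -(u * L * ζ) / (2 * u * L + 1) ≤ -(ζ / 4) := by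
    rw [div_le_iff₀ hpos]
    nlinarith [mul_le_mul_of_nonneg_right h hζ]
  calc cirIntegrand p g L ζ u ≤ u ^ (p - 1) * (2 * L * u) ^ (-g) * exp (-(ζ / 4)) := by
        unfold cirIntegrand; gcongr
    _ = exp (-(ζ / 4)) * ((2 * L * u) ^ (-g) * u ^ (p - 1)) := by ring

lemma setLIntegral_Ioc_cirIntegrand_le (hp : 0 < p) (hg : 0 ≤ g) (hL : 0 < L) (hζ : 0 < ζ) :
    ∫⁻ u in Ioc 0 (2 * L)⁻¹, ENNReal.ofReal (cirIntegrand p g L ζ u) ≤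
      ENNReal.ofReal (Gamma p * (L * ζ / 2) ^ (-p)) := by
  have h2L : 0 < 2 * L := by positivity
  calc ∫⁻ u in Ioc 0 (2 * L)⁻¹, ENNReal.ofReal (cirIntegrand p g L ζ u)
      ≤ ∫⁻ u in Ioc 0 (2 * L)⁻¹, ENNReal.ofReal (u ^ (p - 1) * exp (-(L * ζ / 2 * u))) :=
        setLIntegral_mono' measurableSet_Ioc fun u hu ↦ ENNReal.ofReal_le_ofReal <|
          cirIntegrand_le_of_two_mul_le_one hg hL.le hζ.le hu.1.le
            ((le_inv_mul_iff₀ h2L).1 (by rw [mul_one]; exact hu.2))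
    _ ≤ ∫⁻ u in Ioi 0, ENNReal.ofReal (u ^ (p - 1) * exp (-(L * ζ / 2 * u))) :=
        lintegral_mono_set Ioc_subset_Ioi_self
    _ = ENNReal.ofReal (Gamma p * (L * ζ / 2) ^ (-p)) := by
        rw [lintegral_rpow_mul_exp_neg_mul_Ioi hp (by positivity), one_div,
          inv_rpow (by positivity), ← rpow_neg (by positivity), mul_comm]

lemma setLIntegral_Ioi_cirIntegrand_le (hp : 0 < p) (hpg : p < g) (hL : 0 < L) (hζ : 0 < ζ) :
    ∫⁻ u in Ioi (2 * L)⁻¹, ENNReal.ofReal (cirIntegrand p g L ζ u) ≤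
      ENNReal.ofReal (p ^ p * exp (-p) / (g - p) * (L * ζ / 2) ^ (-p)) := by
  have h2L : 0 < 2 * L := by positivity
  calc ∫⁻ u in Ioi (2 * L)⁻¹, ENNReal.ofReal (cirIntegrand p g L ζ u)
      ≤ ∫⁻ u in Ioi (2 * L)⁻¹,
          ENNReal.ofReal (exp (-(ζ / 4))) * ENNReal.ofReal ((2 * L * u) ^ (-g) * u ^ (p - 1)) :=
        setLIntegral_mono' measurableSet_Ioi fun u (hu : (2 * L)⁻¹ < u) ↦ by
          rw [← ENNReal.ofReal_mul (exp_pos _).le]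
          exact ENNReal.ofReal_le_ofReal <| cirIntegrand_le_of_one_le_two_mul (by linarith) hL
            hζ.le ((inv_pos.2 h2L).trans hu) ((inv_le_iff_one_le_mul₀' h2L).1 hu.le)
    _ = ENNReal.ofReal (exp (-(ζ / 4)) * ((2 * L) ^ (-p) / (g - p))) := by
        rw [lintegral_const_mul' _ _ ENNReal.ofReal_ne_top,
          lintegral_mul_rpow_neg_mul_rpow_Ioi_inv h2L hpg, ← ENNReal.ofReal_mul (exp_pos _).le]
    _ ≤ ENNReal.ofReal (p ^ p * exp (-p) * (ζ / 4) ^ (-p) * ((2 * L) ^ (-p) / (g - p))) := by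
        gcongr
        exact exp_neg_le_mul_rpow_neg hp (by positivity)
    _ = ENNReal.ofReal (p ^ p * exp (-p) / (g - p) * (L * ζ / 2) ^ (-p)) := by
        rw [show L * ζ / 2 = ζ / 4 * (2 * L) by ring, mul_rpow (by positivity) h2L.le]
        congr 1
        ring

end cirIntegrand

theorem cir_negative_moment_bound_general
    (p g : ℝ) (hp₁ : 1 ≤ p) (hp₂ : p < g) :
    ∃ C : ℝ, ∀ L : ℝ, 0 < L → ∀ ζ : ℝ, 0 < ζ →
      ∫⁻ u in Set.Ioi (0 : ℝ),
          ENNReal.ofReal (u ^ (p - 1) * (2 * u * L + 1) ^ (-g)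
            * Real.exp (-(u * L * ζ) / (2 * u * L + 1))) ≤
        ENNReal.ofReal (C * Real.Gamma p * (L * ζ) ^ (-p)) := by
  have hp : 0 < p := by linarith
  refine ⟨2 ^ p * (1 + p ^ p * exp (-p) / (Gamma p * (g - p))), fun L hL ζ hζ ↦ ?_⟩
  have hhalf : (L * ζ / 2) ^ (-p) = 2 ^ p * (L * ζ) ^ (-p) := by
    rw [rpow_neg (by positivity), rpow_neg (by positivity), div_rpow (by positivity) zero_le_two,
      inv_div, div_eq_mul_inv]
  rw [← Ioc_union_Ioi_eq_Ioi (by positivity : (0 : ℝ) ≤ (2 * L)⁻¹),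
    lintegral_union measurableSet_Ioi (Ioc_disjoint_Ioi le_rfl)]
  calc _ ≤ ENNReal.ofReal (Gamma p * (L * ζ / 2) ^ (-p)) +
        ENNReal.ofReal (p ^ p * exp (-p) / (g - p) * (L * ζ / 2) ^ (-p)) :=
        add_le_add (setLIntegral_Ioc_cirIntegrand_le hp (by linarith) hL hζ)
          (setLIntegral_Ioi_cirIntegrand_le hp hp₂ hL hζ)
    _ = _ := by
        have hΓ := (Gamma_pos_of_pos hp).ne'
        have hgp : g - p ≠ 0 := by linarith
        rw [← ENNReal.ofReal_add (by positivity) (by positivity), hhalf]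
        congr 1
        field_simp

/-- Analytic core of Lemma A: for `g > 1` and `1 ≤ p < g` there exists a finite
constant `C = C(p, g)` such that for all `L > 0` and `ζ > 0`,
`∫₀^∞ u^{p−1}(2uL+1)^{−g}·exp(−uLζ/(2uL+1)) du ≤ C·Γ(p)·(Lζ)^{−p}`. -/
theorem cir_negative_moment_bound
    (p g : ℝ) (hg : 1 < g) (hp₁ : 1 ≤ p) (hp₂ : p < g) :
    ∃ C : ℝ, ∀ L : ℝ, 0 < L → ∀ ζ : ℝ, 0 < ζ →
      ∫⁻ u in Set.Ioi (0 : ℝ),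
          ENNReal.ofReal (u ^ (p - 1) * (2 * u * L + 1) ^ (-g)
            * Real.exp (-(u * L * ζ) / (2 * u * L + 1))) ≤
        ENNReal.ofReal (C * Real.Gamma p * (L * ζ) ^ (-p)) :=
  cir_negative_moment_bound_general p g hp₁ hp₂
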